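/- arXiv:1805.06642 — 2 statements merged into one kernel-verified Lean document; each statement's English description precedes it below -/
import Mathlib

section
/- In osp_q(1|2), the sCasimir element S = −A₊A₋ + (q^{-1/2} K² − q^{1/2} K⁻²)/(q − q^{-1}) anticommutes with A₊ and with A₋, i.e. S A₊ + A₊ S = 0 and S A₋ + A₋ S = 0. -/
/-!
Conjugation by `K` scales `A₊` by `s = q^{1/2}` and `A₋` by `s⁻¹`, so `K^{±2}` moves past `A±`
at the cost of a factor `s^{±2}`. Hence the Cartan part `H = s⁻¹K² − sK'²` of `S` satisfies
`H A₊ + A₊ H = (s + s⁻¹) A₊ (K² − K'²)` and `H A₋ + A₋ H = (s + s⁻¹) (K² − K'²) A₋`, while the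
quadratic part `−A₊A₋` contributes `−A₊{A₊, A₋}` resp. `−{A₊, A₋}A₋`, i.e. `−(s − s⁻¹)⁻¹` times the
same element. These cancel because `(s − s⁻¹)(s + s⁻¹) = q − q⁻¹`.
-/

theorem pow_mul_eq_smul_mul_pow {R A : Type*} [CommSemiring R] [Semiring A] [Algebra R A]
    {K X : A} {t : R} (h : K * X = t • (X * K)) (n : ℕ) : K ^ n * X = t ^ n • (X * K ^ n) := by
  induction n with
  | zero => simp
  | succ n ih =>
    rw [pow_succ, mul_assoc, h, mul_smul_comm, ← mul_assoc, ih, smul_mul_assoc, smul_smul,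
      mul_assoc, ← pow_succ, ← pow_succ']

section sCasimir

variable {R A : Type*} [Field R] [Ring A] [Algebra R A]

theorem sub_inv_ne_zero_of_ne_one {q : R} (hq0 : q ≠ 0) (hq1 : q ≠ 1) (hqm1 : q ≠ -1) :
    q - q⁻¹ ≠ 0 := by
  rw [sub_ne_zero]
  intro h
  have hqq : q * q = 1 := by nth_rewrite 2 [h]; exact mul_inv_cancel₀ hq0
  exact (mul_self_eq_one_iff.mp hqq).elim hq1 hqm1

theorem inv_sub_inv_eq_inv_sq_sub_inv_mul {s : R} (hs : s ≠ 0) (hq : s ^ 2 - (s ^ 2)⁻¹ ≠ 0) :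
    (s - s⁻¹)⁻¹ = (s ^ 2 - (s ^ 2)⁻¹)⁻¹ * (s + s⁻¹) := by
  have hfac : s ^ 2 - (s ^ 2)⁻¹ = (s - s⁻¹) * (s + s⁻¹) := by field_simp; ring
  rw [hfac] at hq ⊢
  rw [mul_inv, mul_assoc, inv_mul_cancel₀ (right_ne_zero_of_mul hq), mul_one]

theorem mul_eq_smul_mul_of_mul_mul_eq_smul {K K' X : A} {t : R} (h : K * X * K' = t • X)
    (hK : K' * K = 1) : K * X = t • (X * K) := by
  rw [← smul_mul_assoc, ← h, mul_assoc _ K', hK, mul_one]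

theorem mul_mul_eq_inv_smul_of_mul_mul_eq_smul {K K' X : A} {t : R} (h : K * X * K' = t • X)
    (hK' : K' * K = 1) (ht : t ≠ 0) : K' * X * K = t⁻¹ • X := by
  have hconj : t • (K' * X * K) = X :=
    calc t • (K' * X * K) = K' * (K * X * K') * K := by rw [h, mul_smul_comm, smul_mul_assoc]
      _ = (K' * K) * X * (K' * K) := by simp only [mul_assoc]
      _ = X := by rw [hK', one_mul, mul_one]
  exact (eq_inv_smul_iff₀ ht).mpr hconj

theorem pow_mul_eq_smul_mul_pow_of_mul_mul_eq_smul {K K' X : A} {t : R} (h : K * X * K' = t • X)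
    (hK : K * K' = 1) (hK' : K' * K = 1) (ht : t ≠ 0) (n : ℕ) :
    K ^ n * X = t ^ n • (X * K ^ n) ∧ K' ^ n * X = t⁻¹ ^ n • (X * K' ^ n) :=
  ⟨pow_mul_eq_smul_mul_pow (mul_eq_smul_mul_of_mul_mul_eq_smul h hK') n,
    pow_mul_eq_smul_mul_pow
      (mul_eq_smul_mul_of_mul_mul_eq_smul (mul_mul_eq_inv_smul_of_mul_mul_eq_smul h hK' ht) hK) n⟩

def sCasimir (q s : R) (Ap Am K K' : A) : A :=
  -(Ap * Am) + (q - q⁻¹)⁻¹ • (s⁻¹ • K ^ 2 - s • K' ^ 2)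

variable {s : R} {K K' X : A}

theorem cartan_anticomm_of_raising (hs : s ≠ 0) (hK : K ^ 2 * X = s ^ 2 • (X * K ^ 2))
    (hK' : K' ^ 2 * X = s⁻¹ ^ 2 • (X * K' ^ 2)) :
    (s⁻¹ • K ^ 2 - s • K' ^ 2) * X + X * (s⁻¹ • K ^ 2 - s • K' ^ 2)
      = (s + s⁻¹) • (X * (K ^ 2 - K' ^ 2)) := by
  simp only [sub_mul, mul_sub, smul_mul_assoc, mul_smul_comm, hK, hK', smul_smul, smul_sub]
  match_scalars <;> field_simp
  ring

theorem cartan_anticomm_of_lowering (hs : s ≠ 0) (hK : K ^ 2 * X = s⁻¹ ^ 2 • (X * K ^ 2))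
    (hK' : K' ^ 2 * X = s ^ 2 • (X * K' ^ 2)) :
    (s⁻¹ • K ^ 2 - s • K' ^ 2) * X + X * (s⁻¹ • K ^ 2 - s • K' ^ 2)
      = (s + s⁻¹) • ((K ^ 2 - K' ^ 2) * X) := by
  simp only [sub_mul, mul_sub, smul_mul_assoc, mul_smul_comm, hK, hK', smul_smul, smul_sub]
  match_scalars <;> field_simp <;> ring

variable {q : R} {Ap Am : A}

theorem sCasimir_anticomm_raising (hs : s ≠ 0)
    (hc : (s - s⁻¹)⁻¹ = (q - q⁻¹)⁻¹ * (s + s⁻¹))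
    (hK : K ^ 2 * Ap = s ^ 2 • (Ap * K ^ 2)) (hK' : K' ^ 2 * Ap = s⁻¹ ^ 2 • (Ap * K' ^ 2))
    (hAA : Ap * Am + Am * Ap = (s - s⁻¹)⁻¹ • (K ^ 2 - K' ^ 2)) :
    sCasimir q s Ap Am K K' * Ap + Ap * sCasimir q s Ap Am K K' = 0 :=
  calc sCasimir q s Ap Am K K' * Ap + Ap * sCasimir q s Ap Am K K'
      = -(Ap * (Ap * Am + Am * Ap))
          + (q - q⁻¹)⁻¹ • ((s⁻¹ • K ^ 2 - s • K' ^ 2) * Ap + Ap * (s⁻¹ • K ^ 2 - s • K' ^ 2)) := by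
        simp only [sCasimir, add_mul, mul_add, neg_mul, mul_neg, smul_mul_assoc, mul_smul_comm,
          smul_add, mul_assoc]
        abel
    _ = 0 := by
        rw [hAA, cartan_anticomm_of_raising hs hK hK', hc, mul_smul_comm, mul_smul, neg_add_cancel]

theorem sCasimir_anticomm_lowering (hs : s ≠ 0)
    (hc : (s - s⁻¹)⁻¹ = (q - q⁻¹)⁻¹ * (s + s⁻¹))
    (hK : K ^ 2 * Am = s⁻¹ ^ 2 • (Am * K ^ 2)) (hK' : K' ^ 2 * Am = s ^ 2 • (Am * K' ^ 2))
    (hAA : Ap * Am + Am * Ap = (s - s⁻¹)⁻¹ • (K ^ 2 - K' ^ 2)) :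
    sCasimir q s Ap Am K K' * Am + Am * sCasimir q s Ap Am K K' = 0 :=
  calc sCasimir q s Ap Am K K' * Am + Am * sCasimir q s Ap Am K K'
      = -((Ap * Am + Am * Ap) * Am)
          + (q - q⁻¹)⁻¹ • ((s⁻¹ • K ^ 2 - s • K' ^ 2) * Am + Am * (s⁻¹ • K ^ 2 - s • K' ^ 2)) := by
        simp only [sCasimir, add_mul, mul_add, neg_mul, mul_neg, smul_mul_assoc, mul_smul_comm,
          smul_add, mul_assoc]
        abel
    _ = 0 := by
        rw [hAA, cartan_anticomm_of_lowering hs hK hK', hc, smul_mul_assoc, mul_smul,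
          neg_add_cancel]

end sCasimir

theorem sCasimir_anticommutes_general {A : Type*} [Ring A] [Algebra ℂ A]
    (q s : ℂ) (hq0 : q ≠ 0) (hq1 : q ≠ 1) (hqm1 : q ≠ -1) (hs : s ^ 2 = q)
    (Ap Am K K' : A)
    (h1 : K * Ap * K' = s • Ap)
    (h2 : K * Am * K' = s⁻¹ • Am)
    (h3 : Ap * Am + Am * Ap = (s - s⁻¹)⁻¹ • (K ^ 2 - K' ^ 2))
    (h7 : K * K' = 1) (h8 : K' * K = 1) :
    (-(Ap * Am) + (q - q⁻¹)⁻¹ • (s⁻¹ • K ^ 2 - s • K' ^ 2)) * Ap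
        + Ap * (-(Ap * Am) + (q - q⁻¹)⁻¹ • (s⁻¹ • K ^ 2 - s • K' ^ 2)) = 0
    ∧ (-(Ap * Am) + (q - q⁻¹)⁻¹ • (s⁻¹ • K ^ 2 - s • K' ^ 2)) * Am
        + Am * (-(Ap * Am) + (q - q⁻¹)⁻¹ • (s⁻¹ • K ^ 2 - s • K' ^ 2)) = 0 := by
  subst hs
  have hs0 : s ≠ 0 := by rintro rfl; simp at hq0
  have hc := inv_sub_inv_eq_inv_sq_sub_inv_mul hs0 (sub_inv_ne_zero_of_ne_one hq0 hq1 hqm1)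
  obtain ⟨hKAp, hK'Ap⟩ := pow_mul_eq_smul_mul_pow_of_mul_mul_eq_smul h1 h7 h8 hs0 2
  obtain ⟨hKAm, hK'Am⟩ := pow_mul_eq_smul_mul_pow_of_mul_mul_eq_smul h2 h7 h8 (inv_ne_zero hs0) 2
  rw [inv_inv] at hK'Am
  exact ⟨sCasimir_anticomm_raising hs0 hc hKAp hK'Ap h3,
    sCasimir_anticomm_lowering hs0 hc hKAm hK'Am h3⟩

/-- In `osp_q(1|2)`, the sCasimir `S = −A₊A₋ + (q^{-1/2}K² − q^{1/2}K⁻²)/(q − q⁻¹)`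
anticommutes with `A₊` and with `A₋`. -/
theorem sCasimir_anticommutes {A : Type*} [Ring A] [Algebra ℂ A]
    (q s : ℂ) (hq0 : q ≠ 0) (hq1 : q ≠ 1) (hqm1 : q ≠ -1) (hs : s ^ 2 = q)
    (Ap Am K K' P : A)
    (h1 : K * Ap * K' = s • Ap)
    (h2 : K * Am * K' = s⁻¹ • Am)
    (h3 : Ap * Am + Am * Ap = (s - s⁻¹)⁻¹ • (K ^ 2 - K' ^ 2))
    (h4 : P * Ap = -(Ap * P)) (h5 : P * Am = -(Am * P)) (h6 : P * K = K * P)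
    (h7 : K * K' = 1) (h8 : K' * K = 1) (h9 : P ^ 2 = 1) :
    (-(Ap * Am) + (q - q⁻¹)⁻¹ • (s⁻¹ • K ^ 2 - s • K' ^ 2)) * Ap
        + Ap * (-(Ap * Am) + (q - q⁻¹)⁻¹ • (s⁻¹ • K ^ 2 - s • K' ^ 2)) = 0
    ∧ (-(Ap * Am) + (q - q⁻¹)⁻¹ • (s⁻¹ • K ^ 2 - s • K' ^ 2)) * Am
        + Am * (-(Ap * Am) + (q - q⁻¹)⁻¹ • (s⁻¹ • K ^ 2 - s • K' ^ 2)) = 0 :=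
  sCasimir_anticommutes_general q s hq0 hq1 hqm1 hs Ap Am K K' h1 h2 h3 h7 h8
end

section
/- With respect to the q-Dunkl-Fischer inner product ⟨P, Q⟩ = (conj(P)(D₁^q,…,Dₙ^q) Q)(0) on complex polynomials in n variables (q positive real, q ≠ 1, parameters μ_i > 0), the adjoint of multiplication by x_i is the q-Dunkl operator D_i^q: ⟨x_i P, Q⟩ = ⟨P, D_i^q Q⟩ for all polynomials P, Q. -/
/-!
Since `conj(x_i P)(D) = conj(P)(D) ∘ D_i^q` once the `D_j^q` are known to commute, the identity
reduces to that commutation. It holds because `D_j^q` sends a monomial `x^α` to a scalar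
depending only on `α_j` times `x^(α - e_j)`, so `D_i^q` and `D_j^q` act on disjoint exponents.
-/

open MvPolynomial

/-- The operator rescaling the `i`-th variable by `c` (q-shift `T_{q,i}` for `c = q`,
reflection `r_i` for `c = -1`). -/
noncomputable def varScale (n : ℕ) (c : ℂ) (i : Fin n) :
    MvPolynomial (Fin n) ℂ →ₐ[ℂ] MvPolynomial (Fin n) ℂ :=
  aeval (fun j => if j = i then c • X j else X j)

/-- Formal division by the variable `x_i`. -/
noncomputable def divXi (n : ℕ) (i : Fin n) (f : MvPolynomial (Fin n) ℂ) :
    MvPolynomial (Fin n) ℂ :=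
  ∑ α ∈ f.support, monomial (α - Finsupp.single i 1) (coeff α f)

/-- The `ℤ₂ⁿ` q-Dunkl operator
`D_i^q = (q^{μ_i}/(q−q⁻¹)) (T_{q,i} − r_i)/x_i − (q^{−μ_i}/(q−q⁻¹)) (T_{q,i}⁻¹ − r_i)/x_i`. -/
noncomputable def qDunkl (n : ℕ) (q : ℂ) (μ : Fin n → ℝ) (i : Fin n)
    (f : MvPolynomial (Fin n) ℂ) : MvPolynomial (Fin n) ℂ :=
  (q ^ ((μ i : ℝ) : ℂ) / (q - q⁻¹)) • divXi n i (varScale n q i f - varScale n (-1) i f)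
    - (q ^ ((-(μ i) : ℝ) : ℂ) / (q - q⁻¹)) • divXi n i (varScale n q⁻¹ i f - varScale n (-1) i f)

/-- `conj(P)(D₁^q,…,Dₙ^q)` applied to `Q`. -/
noncomputable def qFischerApply (n : ℕ) (q : ℂ) (μ : Fin n → ℝ)
    (P Q : MvPolynomial (Fin n) ℂ) : MvPolynomial (Fin n) ℂ :=
  ∑ α ∈ P.support,
    (starRingEnd ℂ) (coeff α P) •
      ((List.finRange n).foldr (fun i g => (qDunkl n q μ i)^[α i] ∘ g) id) Q

/-- The q-Dunkl-Fischer inner product `⟨P, Q⟩ = (conj(P)(D₁^q,…,Dₙ^q) Q)(0)`. -/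
noncomputable def qFischerMv (n : ℕ) (q : ℂ) (μ : Fin n → ℝ)
    (P Q : MvPolynomial (Fin n) ℂ) : ℂ :=
  eval (fun _ => (0 : ℂ)) (qFischerApply n q μ P Q)

section CommutingIterates

variable {ι β : Type*} (T : ι → β → β)

lemma commute_foldr_iterate {i : ι} (hT : ∀ j, Function.Commute (T i) (T j))
    (L : List ι) (α : ι → ℕ) :
    Function.Commute (T i) (L.foldr (fun j g => (T j)^[α j] ∘ g) id) := by
  induction L with
  | nil => exact fun _ => rfl
  | cons j L ih => exact ((hT j).iterate_right (α j)).comp_right ih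

lemma foldr_iterate_congr {L : List ι} {α α' : ι → ℕ} (h : ∀ j ∈ L, α j = α' j) :
    L.foldr (fun j g => (T j)^[α j] ∘ g) id = L.foldr (fun j g => (T j)^[α' j] ∘ g) id := by
  induction L with
  | nil => rfl
  | cons j L ih =>
    simp only [List.foldr_cons]
    rw [h j List.mem_cons_self, ih fun k hk => h k (List.mem_cons_of_mem j hk)]

lemma foldr_iterate_update [DecidableEq ι] {i : ι} (hT : ∀ j, Function.Commute (T i) (T j))
    {L : List ι} (hL : L.Nodup) (hi : i ∈ L) (α : ι → ℕ) :
    L.foldr (fun j g => (T j)^[Function.update α i (α i + 1) j] ∘ g) id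
      = L.foldr (fun j g => (T j)^[α j] ∘ g) id ∘ T i := by
  induction L with
  | nil => cases hi
  | cons j L ih =>
    obtain ⟨hjL, hL⟩ := List.nodup_cons.mp hL
    simp only [List.foldr_cons]
    rcases eq_or_ne j i with rfl | hji
    · have hrest : L.foldr (fun k g => (T k)^[Function.update α j (α j + 1) k] ∘ g) id
          = L.foldr (fun k g => (T k)^[α k] ∘ g) id :=
        foldr_iterate_congr T fun k hk => Function.update_of_ne (ne_of_mem_of_not_mem hk hjL) _ _
      rw [hrest, Function.update_self, Function.iterate_succ, Function.comp_assoc,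
        (commute_foldr_iterate T hT L α).comp_eq, Function.comp_assoc]
    · rw [Function.update_of_ne hji, ih hL ((List.mem_cons.mp hi).resolve_left hji.symm),
        Function.comp_assoc]

end CommutingIterates

section QDunkl

variable (n : ℕ)

lemma varScale_monomial (c : ℂ) (i : Fin n) (α : Fin n →₀ ℕ) (a : ℂ) :
    varScale n c i (monomial α a) = c ^ (α i) • monomial α a := by
  have hX : ∀ j, (if j = i then c • X j else X j : MvPolynomial (Fin n) ℂ)
      = C (if j = i then c else 1) * X j := by
    intro j; split_ifs <;> simp [smul_eq_C_mul]
  simp only [varScale, aeval_monomial, hX]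
  rw [Finsupp.prod_pow, monomial_eq, Finsupp.prod_pow]
  simp only [mul_pow, Finset.prod_mul_distrib, ← map_pow, ← map_prod, ite_pow, one_pow,
    Finset.prod_ite_eq', Finset.mem_univ, if_true, smul_eq_C_mul, algebraMap_eq]
  ring

lemma divXi_eq_sum_of_support_subset (i : Fin n) {f : MvPolynomial (Fin n) ℂ}
    {S : Finset (Fin n →₀ ℕ)} (h : f.support ⊆ S) :
    divXi n i f = ∑ α ∈ S, monomial (α - Finsupp.single i 1) (coeff α f) :=
  Finset.sum_subset h fun β _ hβ => by rw [notMem_support_iff.mp hβ, map_zero]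

lemma divXi_monomial (i : Fin n) (α : Fin n →₀ ℕ) (a : ℂ) :
    divXi n i (monomial α a) = monomial (α - Finsupp.single i 1) a := by
  rw [divXi_eq_sum_of_support_subset n i support_monomial_subset, Finset.sum_singleton,
    coeff_monomial, if_pos rfl]

lemma divXi_add (i : Fin n) (f g : MvPolynomial (Fin n) ℂ) :
    divXi n i (f + g) = divXi n i f + divXi n i g := by
  rw [divXi_eq_sum_of_support_subset n i support_add,
    divXi_eq_sum_of_support_subset n i Finset.subset_union_left,
    divXi_eq_sum_of_support_subset n i Finset.subset_union_right, ← Finset.sum_add_distrib]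
  exact Finset.sum_congr rfl fun β _ => by rw [coeff_add, map_add]

lemma divXi_smul (i : Fin n) (c : ℂ) (f : MvPolynomial (Fin n) ℂ) :
    divXi n i (c • f) = c • divXi n i f := by
  rw [divXi_eq_sum_of_support_subset n i support_smul, divXi, Finset.smul_sum]
  exact Finset.sum_congr rfl fun β _ => by rw [coeff_smul, smul_monomial]

variable (q : ℂ) (μ : Fin n → ℝ)

lemma qDunkl_add (i : Fin n) (f g : MvPolynomial (Fin n) ℂ) :
    qDunkl n q μ i (f + g) = qDunkl n q μ i f + qDunkl n q μ i g := by
  simp only [qDunkl, map_add, add_sub_add_comm, divXi_add, smul_add]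

lemma qDunkl_smul (i : Fin n) (c : ℂ) (f : MvPolynomial (Fin n) ℂ) :
    qDunkl n q μ i (c • f) = c • qDunkl n q μ i f := by
  simp only [qDunkl, map_smul, ← smul_sub, divXi_smul, smul_comm _ c]

noncomputable def qDunklCoeff (m : ℝ) (k : ℕ) : ℂ :=
  (q ^ (m : ℂ) / (q - q⁻¹)) * (q ^ k - (-1 : ℂ) ^ k)
    - (q ^ ((-m : ℝ) : ℂ) / (q - q⁻¹)) * ((q⁻¹) ^ k - (-1 : ℂ) ^ k)

lemma qDunkl_monomial (i : Fin n) (α : Fin n →₀ ℕ) (a : ℂ) :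
    qDunkl n q μ i (monomial α a) =
      qDunklCoeff q (μ i) (α i) • monomial (α - Finsupp.single i 1) a := by
  rw [qDunkl, varScale_monomial, varScale_monomial, varScale_monomial, ← sub_smul, ← sub_smul,
    divXi_smul, divXi_smul, divXi_monomial, smul_smul, smul_smul, ← sub_smul, qDunklCoeff]

lemma qDunkl_commute (i j : Fin n) : Function.Commute (qDunkl n q μ i) (qDunkl n q μ j) := by
  rcases eq_or_ne i j with rfl | hij
  · exact Function.Commute.refl _
  intro f
  induction f using MvPolynomial.induction_on' with
  | monomial α a =>
    have hi : (α - Finsupp.single j 1 : Fin n →₀ ℕ) i = α i := by simp [hij]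
    have hj : (α - Finsupp.single i 1 : Fin n →₀ ℕ) j = α j := by simp [hij]
    rw [qDunkl_monomial, qDunkl_smul, qDunkl_monomial, qDunkl_monomial, qDunkl_smul,
      qDunkl_monomial, hi, hj, tsub_right_comm, smul_comm]
  | add f g hf hg => simp only [qDunkl_add, hf, hg]

end QDunkl

theorem qFischer_adjoint_general (n : ℕ) (q : ℝ)
    (μ : Fin n → ℝ) (i : Fin n) (P Q : MvPolynomial (Fin n) ℂ) :
    qFischerMv n (q : ℂ) μ (X i * P) Q = qFischerMv n (q : ℂ) μ P (qDunkl n (q : ℂ) μ i Q) := by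
  simp only [qFischerMv, qFischerApply, support_X_mul, Finset.sum_map, addLeftEmbedding_apply,
    coeff_X_mul]
  refine congrArg _ (Finset.sum_congr rfl fun α _ => congrArg _ ?_)
  have hexp : ⇑(Finsupp.single i 1 + α : Fin n →₀ ℕ) = Function.update α i (α i + 1) := by
    ext j
    rcases eq_or_ne j i with rfl | hji <;> simp [*, add_comm]
  rw [hexp, foldr_iterate_update _ (qDunkl_commute n q μ i) (List.nodup_finRange n)
    (List.mem_finRange i)]
  rfl

/-- Multiplication by `x_i` and the q-Dunkl operator `D_i^q` are adjoint with respect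
to the q-Dunkl-Fischer inner product: `⟨x_i P, Q⟩ = ⟨P, D_i^q Q⟩`. -/
theorem qFischer_adjoint (n : ℕ) (q : ℝ) (hq0 : 0 < q) (hq1 : q ≠ 1)
    (μ : Fin n → ℝ) (hμ : ∀ i, 0 < μ i) (i : Fin n) (P Q : MvPolynomial (Fin n) ℂ) :
    qFischerMv n (q : ℂ) μ (X i * P) Q = qFischerMv n (q : ℂ) μ P (qDunkl n (q : ℂ) μ i Q) :=
  qFischer_adjoint_general n q μ i P Q
end
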